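/- Let y = A_j x_j + n for a single used block j (U = {j}), with A_j of full column rank, blocks normalized so ‖(A_i^H A_i)^{-1/2} A_i^H‖_2 ≤ 1 for all i, and let i be any unused block. If ‖n‖_2 < (σ_min(A_j) − μ_B)‖x_j‖_2 / 2 and μ_B < σ_min(A_j), then ‖(A_i^H A_i)^{-1/2} A_i^H y‖_2 < ‖(A_j^H A_j)^{-1/2} A_j^H y‖_2. -/

import Mathlib

open Matrix Finset
open scoped ComplexOrder

noncomputable section
open scoped Classical

def enorm₂ {n : ℕ} (v : Fin n → ℂ) : ℝ := ‖(WithLp.equiv 2 (Fin n → ℂ)).symm v‖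

def snorm {m n : ℕ} (A : Matrix (Fin m) (Fin n) ℂ) : ℝ :=
  ‖LinearMap.toContinuousLinearMap (Matrix.toEuclideanLin A)‖

def invSqrt {n : ℕ} (M : Matrix (Fin n) (Fin n) ℂ) : Matrix (Fin n) (Fin n) ℂ :=
  if h : M.PosSemidef then (h.1.eigenvectorUnitary.1 * diagonal ((↑) ∘ (√·) ∘ h.1.eigenvalues) *
    (star h.1.eigenvectorUnitary : Matrix (Fin n) (Fin n) ℂ))⁻¹ else 0

def msqrt {n : ℕ} (M : Matrix (Fin n) (Fin n) ℂ) : Matrix (Fin n) (Fin n) ℂ :=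
  if h : M.PosSemidef then h.1.eigenvectorUnitary.1 * diagonal ((↑) ∘ (√·) ∘ h.1.eigenvalues) *
    (star h.1.eigenvectorUnitary : Matrix (Fin n) (Fin n) ℂ) else 0

/-- normalized correlation ‖(AᴴA)^{-1/2} Aᴴ r‖₂ -/
def ncorr {m k : ℕ} (A : Matrix (Fin m) (Fin k) ℂ) (r : Fin m → ℂ) : ℝ :=
  enorm₂ ((invSqrt (Aᴴ * A) * Aᴴ).mulVec r)

end

/-! Whitening the received signal by `(AₖᴴAₖ)^{-1/2}Aₖᴴ` is a contraction, so the noise moves every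
normalized correlation by at most `‖n‖`. Noise-free, block `i` sees at most `μ_B‖xⱼ‖`, while block
`j` sees exactly `‖Aⱼxⱼ‖ ≥ σⱼ‖xⱼ‖`: since `(AᴴA)^{-1/2}AᴴA = (AᴴA)^{1/2}` has the same Gram matrix as
`A`, whitening is isometric on the range of `A`. The noise condition says the resulting margin
`(σⱼ - μ_B)‖xⱼ‖` exceeds `2‖n‖`. -/

namespace Matrix

variable {n : ℕ} {M : Matrix (Fin n) (Fin n) ℂ}

theorem PosSemidef.msqrt_eq_cfc (hM : M.PosSemidef) : msqrt M = cfc Real.sqrt M := by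
  rw [hM.1.cfc_eq, IsHermitian.cfc, msqrt, dif_pos hM, Unitary.conjStarAlgAut_apply]
  rfl

theorem PosSemidef.msqrt_mul_self (hM : M.PosSemidef) : msqrt M * msqrt M = M := by
  have hspec : ∀ x ∈ spectrum ℝ M, 0 ≤ x := by
    intro x hx
    obtain ⟨k, rfl⟩ := hM.1.spectrum_real_eq_range_eigenvalues ▸ hx
    exact hM.eigenvalues_nonneg k
  calc msqrt M * msqrt M = cfc (fun x => √x * √x) M := by rw [hM.msqrt_eq_cfc, cfc_mul ..]
    _ = cfc id M := cfc_congr fun x hx => Real.mul_self_sqrt (hspec x hx)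
    _ = M := cfc_id ℝ M hM.1.isSelfAdjoint

theorem PosSemidef.isHermitian_msqrt (hM : M.PosSemidef) : (msqrt M).IsHermitian := by
  rw [hM.msqrt_eq_cfc]
  exact cfc_predicate _ _

theorem PosSemidef.invSqrt_eq (hM : M.PosSemidef) : invSqrt M = (msqrt M)⁻¹ := by
  rw [invSqrt, msqrt, dif_pos hM, dif_pos hM]

theorem PosDef.invSqrt_mul_self (hM : M.PosDef) : invSqrt M * M = msqrt M := by
  have hS := hM.posSemidef.msqrt_mul_self
  have hdet : IsUnit (msqrt M).det := by
    refine isUnit_iff_ne_zero.mpr fun h0 => hM.det_pos.ne' ?_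
    rw [← hS, det_mul, h0, mul_zero]
  calc invSqrt M * M = (msqrt M)⁻¹ * (msqrt M * msqrt M) := by rw [hM.posSemidef.invSqrt_eq, hS]
    _ = msqrt M := nonsing_inv_mul_cancel_left _ _ hdet

end Matrix

section EuclideanNorm

variable {m n : ℕ}

theorem enorm₂_eq_norm_toLp (v : Fin n → ℂ) : enorm₂ v = ‖WithLp.toLp 2 v‖ := rfl

theorem enorm₂_nonneg (v : Fin n → ℂ) : 0 ≤ enorm₂ v := norm_nonneg _

theorem abs_enorm₂_add_sub_le (a b : Fin n → ℂ) : |enorm₂ (a + b) - enorm₂ a| ≤ enorm₂ b := by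
  simpa [enorm₂_eq_norm_toLp] using abs_norm_sub_norm_le (WithLp.toLp 2 (a + b)) (WithLp.toLp 2 a)

theorem enorm₂_mulVec_le (A : Matrix (Fin m) (Fin n) ℂ) (v : Fin n → ℂ) :
    enorm₂ (A *ᵥ v) ≤ snorm A * enorm₂ v := by
  simpa [enorm₂, snorm, Matrix.toLpLin_toLp] using
    (LinearMap.toContinuousLinearMap (Matrix.toEuclideanLin A)).le_opNorm (WithLp.toLp 2 v)

theorem enorm₂_mulVec_sq (A : Matrix (Fin m) (Fin n) ℂ) (v : Fin n → ℂ) :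
    enorm₂ (A *ᵥ v) ^ 2 = RCLike.re (star v ⬝ᵥ (Aᴴ * A) *ᵥ v) := by
  rw [enorm₂_eq_norm_toLp, norm_sq_eq_re_inner (𝕜 := ℂ), EuclideanSpace.inner_toLp_toLp,
    dotProduct_comm, star_mulVec, ← dotProduct_mulVec, mulVec_mulVec]

theorem enorm₂_mulVec_eq_of_gram_eq {m' : ℕ} {A : Matrix (Fin m) (Fin n) ℂ}
    {C : Matrix (Fin m') (Fin n) ℂ} (hAC : Cᴴ * C = Aᴴ * A) (v : Fin n → ℂ) :
    enorm₂ (C *ᵥ v) = enorm₂ (A *ᵥ v) := by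
  rw [← pow_left_inj₀ (enorm₂_nonneg _) (enorm₂_nonneg _) two_ne_zero, enorm₂_mulVec_sq,
    enorm₂_mulVec_sq, hAC]

end EuclideanNorm

section NormalizedCorrelation

variable {m k : ℕ} (A : Matrix (Fin m) (Fin k) ℂ)

theorem abs_ncorr_add_sub_le (r e : Fin m → ℂ) :
    |ncorr A (r + e) - ncorr A r| ≤ snorm (invSqrt (Aᴴ * A) * Aᴴ) * enorm₂ e := by
  rw [ncorr, ncorr, mulVec_add]
  exact (abs_enorm₂_add_sub_le _ _).trans (enorm₂_mulVec_le _ _)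

theorem ncorr_mulVec_le {l : ℕ} (C : Matrix (Fin m) (Fin l) ℂ) (x : Fin l → ℂ) :
    ncorr A (C *ᵥ x) ≤ snorm (invSqrt (Aᴴ * A) * (Aᴴ * C)) * enorm₂ x := by
  rw [ncorr, mulVec_mulVec, Matrix.mul_assoc]
  exact enorm₂_mulVec_le _ _

variable {A} in
theorem ncorr_mulVec_self (hA : (Aᴴ * A).PosDef) (x : Fin k → ℂ) :
    ncorr A (A *ᵥ x) = enorm₂ (A *ᵥ x) := by
  rw [ncorr, mulVec_mulVec, Matrix.mul_assoc, hA.invSqrt_mul_self]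
  exact enorm₂_mulVec_eq_of_gram_eq
    (by rw [hA.posSemidef.isHermitian_msqrt.eq, hA.posSemidef.msqrt_mul_self]) x

end NormalizedCorrelation

theorem single_block_zdgroth_general
    {M B : ℕ} {Ni : Fin B → ℕ}
    (A : (i : Fin B) → Matrix (Fin M) (Fin (Ni i)) ℂ)
    (j i : Fin B) (hij : i ≠ j)
    (xj : Fin (Ni j) → ℂ)
    (n : Fin M → ℂ)
    (hrank : ∀ k, ((A k)ᴴ * A k).PosDef)
    (hnorm : ∀ k, snorm (invSqrt ((A k)ᴴ * A k) * (A k)ᴴ) ≤ 1)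
    (μB σj : ℝ)
    (hμ : ∀ k l, k ≠ l → snorm (invSqrt ((A k)ᴴ * A k) * ((A k)ᴴ * A l)) ≤ μB)
    (hσ : ∀ v : Fin (Ni j) → ℂ, σj * enorm₂ v ≤ enorm₂ ((A j).mulVec v))
    (hn : enorm₂ n < (σj - μB) * enorm₂ xj / 2)
    (y : Fin M → ℂ)
    (hy : y = (A j).mulVec xj + n) :
    ncorr (A i) y < ncorr (A j) y := by
  subst hy
  have hnoise (k : Fin B) :
      |ncorr (A k) (A j *ᵥ xj + n) - ncorr (A k) (A j *ᵥ xj)| ≤ enorm₂ n :=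
    (abs_ncorr_add_sub_le _ _ _).trans (mul_le_of_le_one_left (enorm₂_nonneg n) (hnorm k))
  have hcross : ncorr (A i) (A j *ᵥ xj) ≤ μB * enorm₂ xj :=
    (ncorr_mulVec_le _ _ _).trans (mul_le_mul_of_nonneg_right (hμ i j hij) (enorm₂_nonneg xj))
  have hsignal : σj * enorm₂ xj ≤ ncorr (A j) (A j *ᵥ xj) :=
    (ncorr_mulVec_self (hrank j) xj).symm ▸ hσ xj
  have hi := abs_le.mp (hnoise i)
  have hj := abs_le.mp (hnoise j)
  linarith

/-- single-transmitter case — small noise implies the unused block has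
strictly smaller normalized correlation than the used block. -/
theorem single_block_zdgroth
    {M B : ℕ} {Ni : Fin B → ℕ}
    (A : (i : Fin B) → Matrix (Fin M) (Fin (Ni i)) ℂ)
    (j i : Fin B) (hij : i ≠ j)
    (xj : Fin (Ni j) → ℂ) (hxj : xj ≠ 0)
    (n : Fin M → ℂ)
    (hrank : ∀ k, ((A k)ᴴ * A k).PosDef)
    (hnorm : ∀ k, snorm (invSqrt ((A k)ᴴ * A k) * (A k)ᴴ) ≤ 1)
    (μB σj : ℝ)
    (hμ : ∀ k l, k ≠ l → snorm (invSqrt ((A k)ᴴ * A k) * ((A k)ᴴ * A l)) ≤ μB)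
    (hσ : ∀ v : Fin (Ni j) → ℂ, σj * enorm₂ v ≤ enorm₂ ((A j).mulVec v))
    (hμσ : μB < σj)
    (hn : enorm₂ n < (σj - μB) * enorm₂ xj / 2)
    (y : Fin M → ℂ)
    (hy : y = (A j).mulVec xj + n) :
    ncorr (A i) y < ncorr (A j) y :=
  single_block_zdgroth_general A j i hij xj n hrank hnorm μB σj hμ hσ hn y hy
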